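/- Let I : H → ℝ be a C² functional on a Hilbert space (H,⟨·,·⟩) for which Assumptions A, B and C hold for some finite-dimensional submanifold Z ⊂ H and continuous λ : Z → (0,∞). Then there cannot be any sequence of critical points u_k of I for which there are z_k ∈ Z with λ(z_k) → ∞ and dist_H(u_k, Z) = ‖z_k − u_k‖_H → 0. -/

import Mathlib

/-!
Write a critical point as `u = z + w` with `z ∈ Z` its foot point, so that `w ∈ V_z`, and
expand `0 = dI(z + w)` to first order at `z`. Tested against `y_z` the expansion gives
`f₀ ≤ f₁‖w‖ + C‖w‖^ν`. Tested against the reflection `w⁺ − w⁻` of `w = w⁺ + w⁻`, the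
definiteness of Assumption A and the modulus of continuity of Assumption C give
`c₀‖w‖² ≤ f₂‖w‖ + (c₀/2)‖w‖²` once `‖w‖` is small, i.e. `‖w‖ ≤ 2f₂/c₀`. Together
`f₀ ≤ M (f₁f₂ + f₂^ν)`, which fails for `λ(z)` large.
-/

noncomputable section
open Filter Metric Set
open scoped RealInnerProductSpace Topology

variable {H : Type*} [NormedAddCommGroup H] [InnerProductSpace ℝ H] [CompleteSpace H]

/-- the first variation dI(u) of a functional `I` at `u`. -/
def dE (I : H → ℝ) (u : H) : H →L[ℝ] ℝ := fderiv ℝ I u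

/-- the second variation d²I(u) of a functional `I` at `u`. -/
def d2E (I : H → ℝ) (u : H) : H →L[ℝ] H →L[ℝ] ℝ := fderiv ℝ (fun v => fderiv ℝ I v) u

/-- the dual norm `‖T‖_{(V)*}` of a continuous functional `T` restricted to a subspace `V`. -/
def restrNorm (V : Submodule ℝ H) (T : H →L[ℝ] ℝ) : ℝ :=
  sInf {c | 0 ≤ c ∧ ∀ w ∈ V, |T w| ≤ c * ‖w‖}

/-- The data of the finite-dimensional submanifold `Z` of almost-critical points: the set `Z`,
its tangent spaces `T z` (finite dimensional), the first-order condition that whenever the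
distance of `u` to `Z` is realised at `z ∈ Z` the vector `u - z` is orthogonal to the tangent
space `T z` (this encodes that `Z` is a submanifold), and the continuous, positive scale
function `λ` on `Z`. -/
structure ZData (H : Type*) [NormedAddCommGroup H] [InnerProductSpace ℝ H]
    [CompleteSpace H] where
  Z : Set H
  /-- the tangent space `T_zZ` -/
  T : H → Submodule ℝ H
  finDim : ∀ z ∈ Z, FiniteDimensional ℝ (T z)
  foot_orth : ∀ u z, z ∈ Z → ‖u - z‖ = Metric.infDist u Z → u - z ∈ (T z)ᗮ
  /-- the scale function `λ : Z → (0,∞)` -/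
  lam : H → ℝ
  lam_pos : ∀ z ∈ Z, 0 < lam z
  lam_cont : ContinuousOn lam Z

/-- `Z_{λ₀}`, the elements of `Z` of scale at least `λ₀`. -/
def ZData.Zge (D : ZData H) (μ : ℝ) : Set H := {z ∈ D.Z | μ ≤ D.lam z}

/-- `V_z`, the orthogonal complement of `T_zZ` in `H`. -/
def ZData.V (D : ZData H) (z : H) : Submodule ℝ H := (D.T z)ᗮ

/-- Assumption A: the second variation of `I` is uniformly definite orthogonally to `Z` on
`Z_{λ₀}`: `V_z` splits orthogonally as `V_z⁺ ⊕ V_z⁻` with `d²I(z)[w⁺,w⁻] = 0` and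
`± d²I(z)[w^±,w^±] ≥ c₀ ‖w^±‖²`. -/
def AssumptionA (I : H → ℝ) (D : ZData H) (lam0 c0 : ℝ) : Prop :=
  0 < c0 ∧ ∀ z ∈ D.Zge lam0, ∃ P N : Submodule ℝ H,
    P ≤ D.V z ∧ N ≤ D.V z ∧
    (∀ w ∈ D.V z, ∃ p ∈ P, ∃ n ∈ N, w = p + n) ∧
    (∀ p ∈ P, ∀ n ∈ N, ⟪p, n⟫ = 0 ∧ d2E I z p n = 0) ∧
    (∀ p ∈ P, c0 * ‖p‖ ^ 2 ≤ d2E I z p p) ∧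
    (∀ n ∈ N, d2E I z n n ≤ -(c0 * ‖n‖ ^ 2))

/-- Assumption B: there are non-increasing positive `f₀, f₁, f₂` on `[λ₀,∞)` and `ν ≥ 1` with
`(f₁f₂ + f₂^ν)/f₀ → 0`, and unit vectors `y_z` for `z ∈ Z_{λ₀}` with
`|dI(z)(y_z)| ≥ f₀(λ(z))`, `‖d²I(z)(y_z,·)‖_{(V_z)*} ≤ f₁(λ(z))`,
`‖dI(z)‖_{(V_z)*} ≤ f₂(λ(z))` and
`|(d²I(z+tw) − d²I(z))[y_z,w]| ≤ C ‖w‖^ν` for `w ∈ V_z`, `t ∈ [0,1]`. -/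
def AssumptionB (I : H → ℝ) (D : ZData H) (lam0 : ℝ)
    (f0 f1 f2 : ℝ → ℝ) (nu : ℝ) (y : H → H) : Prop :=
  1 ≤ nu ∧
  (∀ l, lam0 ≤ l → 0 < f0 l ∧ 0 < f1 l ∧ 0 < f2 l) ∧
  AntitoneOn f0 (Ici lam0) ∧ AntitoneOn f1 (Ici lam0) ∧ AntitoneOn f2 (Ici lam0) ∧
  Tendsto (fun l => (f1 l * f2 l + f2 l ^ nu) / f0 l) atTop (𝓝 0) ∧
  (∀ z ∈ D.Zge lam0, ‖y z‖ = 1 ∧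
    f0 (D.lam z) ≤ |dE I z (y z)| ∧
    restrNorm (D.V z) (d2E I z (y z)) ≤ f1 (D.lam z) ∧
    restrNorm (D.V z) (dE I z) ≤ f2 (D.lam z)) ∧
  (∃ C : ℝ, ∀ z ∈ D.Zge lam0, ∀ w ∈ D.V z, ∀ t ∈ Icc (0:ℝ) 1,
    |d2E I (z + t • w) (y z) w - d2E I z (y z) w| ≤ C * ‖w‖ ^ nu)

/-- a modulus of continuity near zero -/
def ModulusOfContinuity (ω : ℝ → ℝ) : Prop :=
  (∀ t, 0 ≤ t → 0 ≤ ω t) ∧ MonotoneOn ω (Ici 0) ∧ Tendsto ω (𝓝[≥] 0) (𝓝 0)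

/-- Assumption C: on the `δ`-neighbourhood of `Z_{λ₀}` the second variation of `I` is bounded
and has modulus of continuity `ω`. -/
def AssumptionC (I : H → ℝ) (D : ZData H) (lam0 : ℝ) (δ : ℝ) (ω : ℝ → ℝ) : Prop :=
  0 < δ ∧ ModulusOfContinuity ω ∧
  (∃ C : ℝ, ∀ u, Metric.infDist u (D.Zge lam0) < δ → ‖d2E I u‖ ≤ C) ∧
  (∀ u₁ u₂, Metric.infDist u₁ (D.Zge lam0) < δ → Metric.infDist u₂ (D.Zge lam0) < δ →
    ‖d2E I u₁ - d2E I u₂‖ ≤ ω ‖u₁ - u₂‖)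

section General

omit [CompleteSpace H]

theorem abs_apply_le_restrNorm_mul_norm {V : Submodule ℝ H} (T : H →L[ℝ] ℝ) {w : H}
    (hw : w ∈ V) : |T w| ≤ restrNorm V T * ‖w‖ := by
  rcases eq_or_ne w 0 with rfl | hw0
  · simp
  have hwpos : 0 < ‖w‖ := norm_pos_iff.mpr hw0
  have hbdd : ‖T‖ ∈ {c | 0 ≤ c ∧ ∀ w ∈ V, |T w| ≤ c * ‖w‖} :=
    ⟨norm_nonneg _, fun v _ => by simpa only [Real.norm_eq_abs] using T.le_opNorm v⟩
  have hquot : |T w| / ‖w‖ ≤ restrNorm V T :=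
    le_csInf ⟨_, hbdd⟩ fun c hc => (div_le_iff₀ hwpos).mpr (hc.2 w hw)
  exact (div_le_iff₀ hwpos).mp hquot

theorem restrNorm_nonneg (V : Submodule ℝ H) (T : H →L[ℝ] ℝ) : 0 ≤ restrNorm V T :=
  Real.sInf_nonneg fun _ => And.left

variable {I : H → ℝ}

theorem hasFDerivAt_dE (hI : ContDiff ℝ 2 I) (x : H) : HasFDerivAt (dE I) (d2E I x) x :=
  ((hI.fderiv_right (m := 1) (by norm_num)).differentiable (by norm_num) x).hasFDerivAt

theorem d2E_symm (hI : ContDiff ℝ 2 I) (x a b : H) : d2E I x a b = d2E I x b a :=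
  second_derivative_symmetric
    (fun y => (hI.differentiable (by norm_num) y).hasFDerivAt) (hasFDerivAt_dE hI x) a b

theorem abs_dE_add_sub_le (hI : ContDiff ℝ 2 I) {z w v : H} {K : ℝ}
    (hK : ∀ t ∈ Icc (0:ℝ) 1, |d2E I (z + t • w) w v - d2E I z w v| ≤ K) :
    |dE I (z + w) v - dE I z v - d2E I z w v| ≤ K := by
  set g : ℝ → ℝ := fun t => dE I (z + t • w) v - t * d2E I z w v
  have hg : ∀ t : ℝ, HasDerivAt g (d2E I (z + t • w) w v - d2E I z w v) t := by
    intro t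
    have hline : HasDerivAt (fun t : ℝ => z + t • w) w t := by
      simpa using ((hasDerivAt_id t).smul_const w).const_add z
    have hdE : HasDerivAt (fun t : ℝ => dE I (z + t • w)) (d2E I (z + t • w) w) t :=
      (hasFDerivAt_dE hI (z + t • w)).comp_hasDerivAt t hline
    have hdEv : HasDerivAt (fun t : ℝ => dE I (z + t • w) v) (d2E I (z + t • w) w v) t := by
      simpa using hdE.clm_apply (hasDerivAt_const t v)
    exact hdEv.sub (hasDerivAt_mul_const (d2E I z w v))
  have hmvt := (convex_Icc (0:ℝ) 1).norm_image_sub_le_of_norm_hasDerivWithin_le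
    (fun t _ => (hg t).hasDerivWithinAt) (fun t ht => by simpa using hK t ht)
    (left_mem_Icc.mpr zero_le_one) (right_mem_Icc.mpr zero_le_one)
  have hg10 : g 1 - g 0 = dE I (z + w) v - dE I z v - d2E I z w v := by
    simp only [g, one_smul, zero_smul, add_zero, one_mul, zero_mul, sub_zero]
    ring
  simpa [hg10] using hmvt

theorem abs_dE_add_d2E_le_of_dE_add_eq_zero (hI : ContDiff ℝ 2 I) {z w v : H} {K : ℝ}
    (hcrit : dE I (z + w) = 0)
    (hK : ∀ t ∈ Icc (0:ℝ) 1, |d2E I (z + t • w) w v - d2E I z w v| ≤ K) :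
    |dE I z v + d2E I z w v| ≤ K := by
  have h := abs_dE_add_sub_le hI hK
  rwa [hcrit, zero_apply, zero_sub, sub_eq_add_neg, ← neg_add, abs_neg] at h

theorem abs_dE_le_of_dE_add_eq_zero (hI : ContDiff ℝ 2 I) {V : Submodule ℝ H}
    {z w y : H} {K : ℝ} (hw : w ∈ V) (hcrit : dE I (z + w) = 0)
    (hK : ∀ t ∈ Icc (0:ℝ) 1, |d2E I (z + t • w) y w - d2E I z y w| ≤ K) :
    |dE I z y| ≤ restrNorm V (d2E I z y) * ‖w‖ + K := by
  have hexp : |dE I z y + d2E I z w y| ≤ K :=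
    abs_dE_add_d2E_le_of_dE_add_eq_zero hI hcrit fun t ht => by
      simpa only [d2E_symm hI _ w y] using hK t ht
  have hlin : |d2E I z w y| ≤ restrNorm V (d2E I z y) * ‖w‖ := by
    rw [d2E_symm hI]
    exact abs_apply_le_restrNorm_mul_norm _ hw
  have := abs_sub (dE I z y + d2E I z w y) (d2E I z w y)
  rw [add_sub_cancel_right] at this
  linarith

theorem norm_le_of_dE_add_eq_zero (hI : ContDiff ℝ 2 I) {V : Submodule ℝ H} {z w v : H}
    {c : ℝ} (hc : 0 < c) (hv : v ∈ V) (hvw : ‖v‖ = ‖w‖) (hcoer : c * ‖w‖ ^ 2 ≤ d2E I z w v)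
    (hcrit : dE I (z + w) = 0)
    (hmod : ∀ t ∈ Icc (0:ℝ) 1, ‖d2E I (z + t • w) - d2E I z‖ ≤ c / 2) :
    ‖w‖ ≤ 2 / c * restrNorm V (dE I z) := by
  have hrem : ∀ t ∈ Icc (0:ℝ) 1,
      |d2E I (z + t • w) w v - d2E I z w v| ≤ c / 2 * ‖w‖ * ‖w‖ := fun t ht =>
    calc |d2E I (z + t • w) w v - d2E I z w v|
        = ‖(d2E I (z + t • w) - d2E I z) w v‖ := by simp [Real.norm_eq_abs]
      _ ≤ ‖d2E I (z + t • w) - d2E I z‖ * ‖w‖ * ‖v‖ := ContinuousLinearMap.le_opNorm₂ _ _ _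
      _ ≤ c / 2 * ‖w‖ * ‖w‖ := by rw [hvw]; gcongr; exact hmod t ht
  have hexp := abs_dE_add_d2E_le_of_dE_add_eq_zero hI hcrit hrem
  have hlin : |dE I z v| ≤ restrNorm V (dE I z) * ‖w‖ :=
    hvw ▸ abs_apply_le_restrNorm_mul_norm _ hv
  have hsq : c / 2 * ‖w‖ * ‖w‖ ≤ restrNorm V (dE I z) * ‖w‖ := by
    have := abs_sub (dE I z v + d2E I z w v) (dE I z v)
    rw [add_sub_cancel_left] at this
    nlinarith [le_abs_self (d2E I z w v)]
  rcases (norm_nonneg w).eq_or_lt with hw0 | hw0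
  · rw [← hw0]
    exact mul_nonneg (by positivity) (restrNorm_nonneg _ _)
  · rw [div_mul_eq_mul_div, le_div_iff₀ hc]
    nlinarith [le_of_mul_le_mul_right hsq hw0]

theorem le_max_mul_add_rpow {f a b C K x ν : ℝ} (ha : 0 ≤ a) (hb : 0 ≤ b) (hC : 0 ≤ C)
    (hK : 0 ≤ K) (hν : 0 ≤ ν) (hx0 : 0 ≤ x) (hx : x ≤ K * b) (hf : f ≤ a * x + C * x ^ ν) :
    f ≤ max K (C * K ^ ν) * (a * b + b ^ ν) := by
  have hxν : x ^ ν ≤ K ^ ν * b ^ ν :=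
    (Real.rpow_le_rpow hx0 hx hν).trans_eq (Real.mul_rpow hK hb)
  have hlin : a * x ≤ K * (a * b) := by nlinarith [mul_le_mul_of_nonneg_left hx ha]
  have hpow : C * x ^ ν ≤ C * K ^ ν * b ^ ν := by
    rw [mul_assoc]
    exact mul_le_mul_of_nonneg_left hxν hC
  have hmax : K * (a * b) + C * K ^ ν * b ^ ν ≤
      max K (C * K ^ ν) * (a * b) + max K (C * K ^ ν) * b ^ ν :=
    add_le_add (mul_le_mul_of_nonneg_right (le_max_left _ _) (mul_nonneg ha hb))
      (mul_le_mul_of_nonneg_right (le_max_right _ _) (Real.rpow_nonneg hb ν))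
  linarith [mul_add (max K (C * K ^ ν)) (a * b) (b ^ ν)]

end General

variable {I : H → ℝ} {D : ZData H} {lam0 : ℝ}

theorem AssumptionA.exists_coercive_reflection {c0 : ℝ} (hI : ContDiff ℝ 2 I)
    (hA : AssumptionA I D lam0 c0) {z w : H} (hz : z ∈ D.Zge lam0) (hw : w ∈ D.V z) :
    ∃ v ∈ D.V z, ‖v‖ = ‖w‖ ∧ c0 * ‖w‖ ^ 2 ≤ d2E I z w v := by
  obtain ⟨P, N, hPV, hNV, hsplit, horth, hP, hN⟩ := hA.2 z hz
  obtain ⟨p, hp, n, hn, rfl⟩ := hsplit w hw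
  obtain ⟨hpn, hd2pn⟩ := horth p hp n hn
  have hd2np : d2E I z n p = 0 := by rw [d2E_symm hI]; exact hd2pn
  refine ⟨p - n, sub_mem (hPV hp) (hNV hn),
    norm_sub_eq_norm_add ((real_inner_comm _ _).trans hpn), ?_⟩
  have hexpand : d2E I z (p + n) (p - n) = d2E I z p p - d2E I z n n := by
    simp only [map_add, map_sub, add_apply, hd2pn, hd2np]
    ring
  rw [hexpand, norm_add_sq_real, hpn]
  linarith [hP p hp, hN n hn]

theorem AssumptionC.norm_d2E_sub_le {δ : ℝ} {ω : ℝ → ℝ} (hC : AssumptionC I D lam0 δ ω)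
    {z w : H} (hz : z ∈ D.Zge lam0) (hw : ‖w‖ < δ) {t : ℝ} (ht : t ∈ Icc (0:ℝ) 1) :
    ‖d2E I (z + t • w) - d2E I z‖ ≤ ω ‖w‖ := by
  obtain ⟨hδ, ⟨-, hωmono, -⟩, -, hmod⟩ := hC
  have htw : ‖t • w‖ ≤ ‖w‖ := by
    rw [norm_smul, Real.norm_of_nonneg ht.1]
    exact mul_le_of_le_one_left (norm_nonneg _) ht.2
  have hnear : ∀ x, ‖x‖ < δ → infDist (z + x) (D.Zge lam0) < δ := fun x hx =>
    (infDist_le_dist_of_mem hz).trans_lt (by rwa [dist_eq_norm, add_sub_cancel_left])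
  calc ‖d2E I (z + t • w) - d2E I z‖ ≤ ω ‖z + t • w - z‖ :=
        hmod _ _ (hnear _ (htw.trans_lt hw)) (by simpa using hnear 0 (by simpa using hδ))
    _ ≤ ω ‖w‖ := by
        rw [add_sub_cancel_left]
        exact hωmono (norm_nonneg _) (norm_nonneg _) htw

theorem AssumptionB.exists_f0_le {f0 f1 f2 : ℝ → ℝ} {nu : ℝ} {y : H → H}
    (hI : ContDiff ℝ 2 I) (hB : AssumptionB I D lam0 f0 f1 f2 nu y) :
    ∃ C, 0 ≤ C ∧ ∀ z ∈ D.Zge lam0, ∀ w ∈ D.V z, dE I (z + w) = 0 →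
      f0 (D.lam z) ≤ f1 (D.lam z) * ‖w‖ + C * ‖w‖ ^ nu := by
  obtain ⟨-, -, -, -, -, -, hy, C, hC⟩ := hB
  refine ⟨max C 0, le_max_right _ _, fun z hz w hw hcrit => ?_⟩
  obtain ⟨-, hf0, hf1, -⟩ := hy z hz
  have hK : ∀ t ∈ Icc (0:ℝ) 1,
      |d2E I (z + t • w) (y z) w - d2E I z (y z) w| ≤ max C 0 * ‖w‖ ^ nu := fun t ht =>
    (hC z hz w hw t ht).trans
      (mul_le_mul_of_nonneg_right (le_max_left _ _) (Real.rpow_nonneg (norm_nonneg _) _))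
  calc f0 (D.lam z) ≤ |dE I z (y z)| := hf0
    _ ≤ restrNorm (D.V z) (d2E I z (y z)) * ‖w‖ + max C 0 * ‖w‖ ^ nu :=
        abs_dE_le_of_dE_add_eq_zero hI hw hcrit hK
    _ ≤ f1 (D.lam z) * ‖w‖ + max C 0 * ‖w‖ ^ nu := by gcongr

/-- **Theorem (no critical points accumulating on `Z` at large scale).** If Assumptions A, B
and C hold for the C² functional `I`, the finite-dimensional submanifold `Z` and the
continuous `λ : Z → (0,∞)`, then there is no sequence of critical points `u_k` of `I` with
`z_k ∈ Z`, `λ(z_k) → ∞` and `dist_H(u_k,Z) = ‖z_k − u_k‖ → 0`. -/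
theorem no_critical_points_accumulating_on_Z
    (I : H → ℝ) (hI : ContDiff ℝ 2 I) (D : ZData H)
    (lam0 c0 δ : ℝ) (f0 f1 f2 : ℝ → ℝ) (nu : ℝ) (y : H → H) (ω : ℝ → ℝ)
    (hA : AssumptionA I D lam0 c0)
    (hB : AssumptionB I D lam0 f0 f1 f2 nu y)
    (hC : AssumptionC I D lam0 δ ω) :
    ¬ ∃ u z : ℕ → H,
        (∀ k, fderiv ℝ I (u k) = 0) ∧
        (∀ k, z k ∈ D.Z) ∧
        Tendsto (fun k => D.lam (z k)) atTop atTop ∧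
        (∀ k, ‖z k - u k‖ = Metric.infDist (u k) D.Z) ∧
        Tendsto (fun k => ‖z k - u k‖) atTop (𝓝 0) := by
  rintro ⟨u, z, hcrit, hzZ, hlam, hfoot, hdist⟩
  obtain ⟨C, hC0, hf0_le⟩ := hB.exists_f0_le hI
  obtain ⟨hnu, hfpos, -, -, -, hquot, hy, -⟩ := hB
  have hc0 : 0 < c0 := hA.1
  have hδ : 0 < δ := hC.1
  have hω0 : Tendsto ω (𝓝[≥] 0) (𝓝 0) := hC.2.1.2.2
  set M := max (2 / c0) (C * (2 / c0) ^ nu)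
  have hw : Tendsto (fun k => ‖u k - z k‖) atTop (𝓝 0) := by
    simpa only [norm_sub_rev] using hdist
  have hωw : Tendsto (fun k => ω ‖u k - z k‖) atTop (𝓝 0) :=
    hω0.comp (tendsto_nhdsWithin_iff.mpr ⟨hw, .of_forall fun _ => norm_nonneg _⟩)
  have hquotM := (hquot.comp hlam).const_mul M
  rw [mul_zero] at hquotM
  obtain ⟨k, hk0, hkδ, hkω, hkq⟩ := ((hlam.eventually_ge_atTop lam0).and
    ((hw.eventually_lt_const hδ).and ((hωw.eventually_le_const (half_pos hc0)).and
      (hquotM.eventually_lt_const one_pos)))).exists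
  set w := u k - z k
  have hzk : z k ∈ D.Zge lam0 := ⟨hzZ k, hk0⟩
  have hwV : w ∈ D.V (z k) := D.foot_orth _ _ (hzZ k) ((norm_sub_rev _ _).trans (hfoot k))
  have hcritk : dE I (z k + w) = 0 := by rw [add_sub_cancel]; exact hcrit k
  obtain ⟨hf0pos, hf1pos, hf2pos⟩ := hfpos _ hk0
  obtain ⟨v, hv, hvw, hcoer⟩ := hA.exists_coercive_reflection hI hzk hwV
  have hwle : ‖w‖ ≤ 2 / c0 * f2 (D.lam (z k)) :=
    (norm_le_of_dE_add_eq_zero hI hc0 hv hvw hcoer hcritk fun t ht =>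
      (hC.norm_d2E_sub_le hzk hkδ ht).trans hkω).trans
      (mul_le_mul_of_nonneg_left (hy _ hzk).2.2.2 (div_nonneg zero_le_two hc0.le))
  have hf0 := le_max_mul_add_rpow hf1pos.le hf2pos.le hC0 (div_nonneg zero_le_two hc0.le)
    (zero_le_one.trans hnu) (norm_nonneg _) hwle (hf0_le _ hzk _ hwV hcritk)
  rw [Function.comp_apply, mul_div_assoc', div_lt_one hf0pos] at hkq
  linarith
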